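/- arXiv:math/0512227 — 2 statements merged into one kernel-verified Lean document; each statement's English description precedes it below -/
import Mathlib

section
/- For every n ≥ 0, the map (T,λ) ↦ σ(T,λ) is a bijection from the set of all increasing trees with n branchings onto the set Comp_n of all set compositions of [n]. -/
set_option linter.unreachableTactic false
set_option linter.unusedTactic false
set_option maxHeartbeats 1000000


open Finset

/-- Candidate set compositions: lists of finite sets of positive naturals. -/
abbrev SC : Type := List (Finset ℕ)

/-- The underlying (ground) set of a list of blocks. -/
def ground (L : SC) : Finset ℕ := L.foldr (· ∪ ·) ∅

/-- `L` is a set composition of `[n] = {1,…,n}`. -/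
def IsSetComp (n : ℕ) (L : SC) : Prop :=
  (∀ B ∈ L, B.Nonempty) ∧ L.Pairwise Disjoint ∧ ground L = Finset.Icc 1 n

/-- The degree of a set composition (largest element of its ground set). -/
def maxG (L : SC) : ℕ := (ground L).sup id

/-- The 1-based rank of `x` inside the finite set `A` (the position of `x` in the
increasing enumeration of `A`, when `x ∈ A`); this is the order preserving
relabelling `A → [|A|]`. -/
def rankIn (A : Finset ℕ) (x : ℕ) : ℕ := (A.filter (· ≤ x)).card

/-- `P|_A` : intersect the blocks with `A`, delete the empty intersections, and
relabel along the order preserving bijection `A → [|A|]`. -/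
def restrictSC (A : Finset ℕ) (L : SC) : SC :=
  (L.map fun B => (B ∩ A).image (rankIn A)).filter fun B => decide B.Nonempty

/-- Shift all entries of all blocks by `p`. -/
def shiftSC (p : ℕ) (L : SC) : SC := L.map (Finset.image (· + p))

/-- The restricted product `∗̄` on set compositions:
`P ∗̄ Q = (P₁,…,P_k, p+Q₁,…,p+Q_l)` for `P ∈ Comp_p`. -/
def barMul (P Q : SC) : SC := P ++ shiftSC (maxG P) Q

/-- The order-preserving relabelling map `S → T` (`is_{S,T}`), for finite sets
of equal cardinality. -/
def relabelFun (S T : Finset ℕ) (x : ℕ) : ℕ := (T.sort (· ≤ ·)).getD (rankIn S x - 1) 0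

/-- Relabel a set composition of `S` along the order-preserving bijection `S → T`. -/
def relabelSC (S T : Finset ℕ) (L : SC) : SC := L.map (Finset.image (relabelFun S T))

variable (R : Type) [CommRing R]

/-- The free module with basis indexed by lists of blocks; the twisted descent
algebra `T_•` is its submodule spanned by the set compositions. -/
abbrev FM := SC →₀ R

/-- `T_•` as a submodule: the span of the set compositions. -/
noncomputable def Tspan : Submodule R (FM R) :=
  Submodule.span R {f : FM R | ∃ n P, IsSetComp n P ∧ f = Finsupp.single P 1}

/-- The restricted product `∗̄` as a bilinear map. -/
noncomputable def barL : FM R →ₗ[R] FM R →ₗ[R] FM R :=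
  Finsupp.lift _ R SC fun P => Finsupp.lift _ R SC fun Q => Finsupp.single (barMul P Q) 1

/-- The symmetrized product `∗̂` on basis elements:
`P ∗̂ Q = Σ is_{[p],A}(P) ∗ is_{[q],B}(Q)` over all `A ⊔ B = [p+q]`, `|A| = p`. -/
noncomputable def hatB (P Q : SC) : FM R :=
  ∑ A ∈ (Finset.Icc 1 (maxG P + maxG Q)).powerset.filter (fun A => A.card = maxG P),
    Finsupp.single
      (relabelSC (Finset.Icc 1 (maxG P)) A P ++
        relabelSC (Finset.Icc 1 (maxG Q)) ((Finset.Icc 1 (maxG P + maxG Q)) \ A) Q) 1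

/-- The symmetrized product `∗̂` as a bilinear map. -/
noncomputable def hatL : FM R →ₗ[R] FM R →ₗ[R] FM R :=
  Finsupp.lift _ R SC fun P => Finsupp.lift _ R SC fun Q => hatB R P Q

/-- `T_• ⊗ T_•`, realized as the free module on pairs of basis elements. -/
abbrev FM2 := (SC × SC) →₀ R

/-- `T_• ⊗ T_• ⊗ T_•`, realized as the free module on triples of basis elements. -/
abbrev FM3 := (SC × SC × SC) →₀ R

/-- The restricted coproduct `δ̄ (P) = Σ_{p=0}^n P|_{[p]} ⊗ P|_{{p+1,…,n}}`. -/
noncomputable def dBarL : FM R →ₗ[R] FM2 R :=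
  Finsupp.lift _ R SC fun P =>
    ∑ p ∈ Finset.range (maxG P + 1),
      Finsupp.single
        (restrictSC (Finset.Icc 1 p) P, restrictSC (Finset.Icc (p+1) (maxG P)) P) 1

/-- The cosymmetrized coproduct `δ̂ (P) = Σ_{A ⊔ B = [n]} P|_A ⊗ P|_B`. -/
noncomputable def dHatL : FM R →ₗ[R] FM2 R :=
  Finsupp.lift _ R SC fun P =>
    ∑ A ∈ (Finset.Icc 1 (maxG P)).powerset,
      Finsupp.single (restrictSC A P, restrictSC ((Finset.Icc 1 (maxG P)) \ A) P) 1

/-- Apply a coproduct to the first tensor factor:  `d ⊗ id : T⊗T → T⊗T⊗T`. -/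
noncomputable def applyFst (d : FM R →ₗ[R] FM2 R) : FM2 R →ₗ[R] FM3 R :=
  Finsupp.lift _ R (SC × SC) fun PQ =>
    Finsupp.mapDomain (fun RS : SC × SC => (RS.1, RS.2, PQ.2)) (d (Finsupp.single PQ.1 1))

/-- Apply a coproduct to the second tensor factor:  `id ⊗ d : T⊗T → T⊗T⊗T`. -/
noncomputable def applySnd (d : FM R →ₗ[R] FM2 R) : FM2 R →ₗ[R] FM3 R :=
  Finsupp.lift _ R (SC × SC) fun PQ =>
    Finsupp.mapDomain (fun RS : SC × SC => (PQ.1, RS.1, RS.2)) (d (Finsupp.single PQ.2 1))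

/-- `ε ⊗ id : T⊗T → T`, where `ε` is the projection onto `T_0 ≅ R`
(the coefficient of the empty set composition). -/
noncomputable def epsFst : FM2 R →ₗ[R] FM R :=
  Finsupp.lift _ R (SC × SC) fun PQ =>
    if PQ.1 = ([] : SC) then Finsupp.single PQ.2 1 else 0

/-- `id ⊗ ε : T⊗T → T`. -/
noncomputable def epsSnd : FM2 R →ₗ[R] FM R :=
  Finsupp.lift _ R (SC × SC) fun PQ =>
    if PQ.2 = ([] : SC) then Finsupp.single PQ.1 1 else 0

/-- The twist map `x ⊗ y ↦ y ⊗ x` on `T_• ⊗ T_•`. -/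
noncomputable def twistL : FM2 R →ₗ[R] FM2 R :=
  Finsupp.lift _ R (SC × SC) fun PQ => Finsupp.single (PQ.2, PQ.1) 1

/-- The counit: projection onto the degree-0 component `T_0 ≅ R`. -/
noncomputable def counitL : FM R →ₗ[R] R :=
  Finsupp.lift _ R SC fun P => if P = ([] : SC) then 1 else 0

inductive PTree : Type
  | eps : PTree
  | wedge : PTree → PTree → List PTree → PTree

inductive LTree : Type
  | eps : LTree
  | wedge : ℕ → LTree → LTree → List LTree → LTree

namespace LTree

def levels : LTree → List ℕ
  | .eps => []
  | .wedge r t0 t1 rest =>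
      r :: (t0.levels ++ t1.levels ++ (rest.attach.map (fun x => x.1.levels)).flatten)
decreasing_by all_goals (first
  | (have h := List.sizeOf_lt_of_mem x.2; simp_wf; simp at h; omega)
  | (have h := List.sizeOf_lt_of_mem x.2; simp_wf; omega)
  | (simp_wf; omega))

def numLevels (t : LTree) : ℕ := t.levels.foldr max 0

def brLevels : LTree → List ℕ
  | .eps => []
  | .wedge r t0 t1 rest =>
      t0.brLevels ++ r :: t1.brLevels ++
        (rest.attach.map (fun x => r :: x.1.brLevels)).flatten
decreasing_by all_goals (first
  | (have h := List.sizeOf_lt_of_mem x.2; simp_wf; simp at h; omega)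
  | (have h := List.sizeOf_lt_of_mem x.2; simp_wf; omega)
  | (simp_wf; omega))

def addLevels (c : ℕ) : LTree → LTree
  | .eps => .eps
  | .wedge r t0 t1 rest =>
      .wedge (r + c) (t0.addLevels c) (t1.addLevels c)
        (rest.attach.map (fun x => x.1.addLevels c))
decreasing_by all_goals (first
  | (have h := List.sizeOf_lt_of_mem x.2; simp_wf; simp at h; omega)
  | (have h := List.sizeOf_lt_of_mem x.2; simp_wf; omega)
  | (simp_wf; omega))

end LTree

def Fgt : LTree → PTree
  | .eps => .eps
  | .wedge _ t0 t1 rest => .wedge (Fgt t0) (Fgt t1) (rest.attach.map (fun x => Fgt x.1))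
decreasing_by all_goals (first
  | (have h := List.sizeOf_lt_of_mem x.2; simp_wf; simp at h; omega)
  | (have h := List.sizeOf_lt_of_mem x.2; simp_wf; omega)
  | (simp_wf; omega))

def graftP (s : PTree) : PTree → PTree
  | .eps => s
  | .wedge t0 t1 rest => .wedge (graftP s t0) t1 rest

def Inc : PTree → LTree
  | .eps => .eps
  | .wedge t0 t1 rest =>
      let incs := Inc t0 :: Inc t1 :: rest.attach.map (fun x => Inc x.1)
      let offs := (incs.map LTree.numLevels).scanl (· + ·) 1
      match (incs.zip offs).map (fun p => p.1.addLevels p.2) with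
      | s0 :: s1 :: srest => .wedge 1 s0 s1 srest
      | _ => .eps
decreasing_by all_goals (first
  | (have h := List.sizeOf_lt_of_mem x.2; simp_wf; simp at h; omega)
  | (have h := List.sizeOf_lt_of_mem x.2; simp_wf; omega)
  | (simp_wf; omega))

def brPaths : LTree → List (List ℕ)
  | .eps => []
  | .wedge _ t0 t1 rest =>
      (brPaths t0).map (fun p => 0 :: p) ++
        ((((t1 :: rest).attach.map (fun x => brPaths x.1)).zipIdx.map
          (fun is => ([] : List ℕ) :: is.1.map (fun p => (is.2 + 1) :: p))).flatten)
decreasing_by all_goals (first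
  | (have h := List.sizeOf_lt_of_mem x.2; simp_wf; simp at h; omega)
  | (have h := List.sizeOf_lt_of_mem x.2; simp_wf; omega)
  | (simp_wf; omega))

def sigmaOf (t : LTree) : List (Finset ℕ) :=
  let w := t.brLevels
  (List.range (w.foldr max 0)).map fun i =>
    ((List.range w.length).filter (fun j => w.getD j 0 = i + 1)).toFinset.image (· + 1)

/-- The level function is strictly increasing from the root down, all levels
being `> lo`: this expresses that levels strictly increase along every path
joining a leaf to the root. -/
inductive IncrFrom : ℕ → LTree → Prop
  | eps (lo : ℕ) : IncrFrom lo .eps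
  | wedge (lo r : ℕ) (t0 t1 : LTree) (rest : List LTree) :
      lo < r → IncrFrom r t0 → IncrFrom r t1 → (∀ t ∈ rest, IncrFrom r t) →
      IncrFrom lo (.wedge r t0 t1 rest)

/-- An increasing tree: the level function is strictly increasing along every
path from a leaf to the root, and its set of values is `[k]` for some `k ≥ 0`
(it is standard). -/
def IsIncTree (t : LTree) : Prop :=
  IncrFrom 0 t ∧ t.levels.toFinset = Finset.Icc 1 t.numLevels

/-- Two vertices, recorded by their root-to-vertex paths of child indices, lie
on a common path connecting a leaf with the root iff one is an ancestor of the
other, i.e. iff one path is a prefix of the other. -/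
def OnCommonPath (p q : List ℕ) : Prop := p <+: q ∨ q <+: p


/-! Reading the levels of the branchings of an increasing tree from left to right gives a word
whose set of letters is `[k]` (a packed word), and `σ` records, for each level `i`, the positions
of the letter `i`. The root carries the smallest letter, its occurrences are exactly the root
branchings, and cutting the word at them gives the words of the subtrees; so splitting at the
minimum inverts the reading map, and increasing trees correspond to packed words. A packed word
of length `n` is in turn recovered from its set composition of `[n]` by writing at each position
the index of the block containing it. -/

namespace List

variable {α : Type*}

theorem singleton_intercalate_cons (r : α) (a : List α) (zs : List (List α)) :
    [r].intercalate (a :: zs) = a ++ (zs.map (r :: ·)).flatten := by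
  induction zs generalizing a with
  | nil => simp
  | cons b zs ih => simp [ih]

variable [BEq α] [LawfulBEq α]

theorem sublist_and_not_mem_of_mem_splitOn {x : α} :
    ∀ {w l : List α}, l ∈ w.splitOn x → l <+ w ∧ x ∉ l
  | [], l, hl => by simp_all [splitOn_nil]
  | a :: w, l, hl => by
    rw [splitOn_cons_eq_if_modifyHead] at hl
    split_ifs at hl with hax
    · rcases mem_cons.mp hl with rfl | hl
      · simp
      · exact (sublist_and_not_mem_of_mem_splitOn hl).imp (·.cons a) id
    · obtain ⟨p, ps, hps⟩ := exists_cons_of_ne_nil (splitOn_ne_nil x w)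
      have hp := sublist_and_not_mem_of_mem_splitOn (hps ▸ mem_cons_self : p ∈ w.splitOn x)
      rw [hps, modifyHead_cons, mem_cons] at hl
      rcases hl with rfl | hl
      · refine ⟨hp.1.cons_cons a, ?_⟩
        rw [mem_cons, not_or]
        exact ⟨fun h => hax (by simp [h]), hp.2⟩
      · exact (sublist_and_not_mem_of_mem_splitOn
          (hps ▸ mem_cons_of_mem p hl : l ∈ w.splitOn x)).imp (·.cons a) id

theorem length_lt_of_mem_splitOn {x : α} {w l : List α} (hx : x ∈ w) (hl : l ∈ w.splitOn x) :
    l.length < w.length := by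
  obtain ⟨hsub, hxl⟩ := sublist_and_not_mem_of_mem_splitOn hl
  exact lt_of_le_of_ne hsub.length_le fun h => hxl (hsub.eq_of_length h ▸ hx)

end List

namespace LTree

/-- The case `[t]` never occurs in `ofWord` (cutting a word at one of its letters leaves at
least two pieces); sending it to `t` makes `brLevels_mkWedge` hold for every list. -/
def mkWedge (r : ℕ) : List LTree → LTree
  | [] => .eps
  | [t] => t
  | t0 :: t1 :: rest => .wedge r t0 t1 rest

def ofWord (w : List ℕ) : LTree :=
  if hw : w = [] then .eps
  else mkWedge (w.min hw) ((w.splitOn (w.min hw)).attach.map fun s => ofWord s.1)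
termination_by w.length
decreasing_by exact List.length_lt_of_mem_splitOn (List.min_mem hw) s.2

@[simp]
theorem ofWord_nil : ofWord [] = .eps := by
  rw [ofWord, dif_pos rfl]

theorem ofWord_of_ne_nil {w : List ℕ} (hw : w ≠ []) :
    ofWord w = mkWedge (w.min hw) ((w.splitOn (w.min hw)).map ofWord) := by
  rw [ofWord, dif_neg hw]
  simp

theorem brLevels_wedge (r : ℕ) (t0 t1 : LTree) (rest : List LTree) :
    (wedge r t0 t1 rest).brLevels = [r].intercalate ((t0 :: t1 :: rest).map brLevels) := by
  rw [brLevels, List.map_cons, List.singleton_intercalate_cons]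
  simp [Function.comp_def]

theorem brLevels_mkWedge (r : ℕ) (ts : List LTree) :
    (mkWedge r ts).brLevels = [r].intercalate (ts.map brLevels) := by
  match ts with
  | [] => simp [mkWedge, brLevels]
  | [t] => simp [mkWedge]
  | t0 :: t1 :: rest => exact brLevels_wedge r t0 t1 rest

theorem brLevels_ofWord (w : List ℕ) : (ofWord w).brLevels = w := by
  induction w using ofWord.induct with
  | case1 => simp [brLevels]
  | case2 w hw ih =>
    rw [ofWord_of_ne_nil hw, brLevels_mkWedge, List.map_map]
    conv_rhs => rw [← List.intercalate_splitOn (w.min hw) (xs := w)]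
    congr 1
    exact (List.map_congr_left (g := id) fun s hs => ih ⟨s, hs⟩).trans (List.map_id _)

theorem mem_brLevels_wedge {x r : ℕ} {t0 t1 : LTree} {rest : List LTree} :
    x ∈ (wedge r t0 t1 rest).brLevels ↔
      x = r ∨ ∃ t ∈ t0 :: t1 :: rest, x ∈ t.brLevels := by
  aesop (add norm simp brLevels)

theorem mem_levels_wedge {x r : ℕ} {t0 t1 : LTree} {rest : List LTree} :
    x ∈ (wedge r t0 t1 rest).levels ↔ x = r ∨ ∃ t ∈ t0 :: t1 :: rest, x ∈ t.levels := by
  simp [levels]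

theorem mem_levels_iff_mem_brLevels {x : ℕ} : ∀ t : LTree, x ∈ t.levels ↔ x ∈ t.brLevels
  | .eps => by simp [levels, brLevels]
  | .wedge r t0 t1 rest => by
    rw [mem_levels_wedge, mem_brLevels_wedge]
    refine or_congr_right (exists_congr fun t => and_congr_right fun ht => ?_)
    exact mem_levels_iff_mem_brLevels t
termination_by t => t
decreasing_by
  obtain rfl | rfl | ht := List.mem_cons.mp ht |>.imp_right List.mem_cons.mp
  · simp only [wedge.sizeOf_spec]; omega
  · simp only [wedge.sizeOf_spec]; omega
  · have := List.sizeOf_lt_of_mem ht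
    simp only [wedge.sizeOf_spec]; omega

end LTree

open LTree

theorem IncrFrom.mono {lo lo' : ℕ} {t : LTree} (h : IncrFrom lo t) (hle : lo' ≤ lo) :
    IncrFrom lo' t := by
  cases h with
  | eps => exact .eps lo'
  | wedge _ r t0 t1 rest hr h0 h1 hrest => exact .wedge lo' r t0 t1 rest (by omega) h0 h1 hrest

theorem IncrFrom.lt_of_mem_brLevels {lo : ℕ} {t : LTree} (h : IncrFrom lo t) :
    ∀ x ∈ t.brLevels, lo < x := by
  induction h with
  | eps => simp [brLevels]
  | wedge lo r t0 t1 rest hr h0 h1 hrest ih0 ih1 ihrest =>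
    intro x hx
    rcases mem_brLevels_wedge.mp hx with rfl | ⟨t, ht, hxt⟩
    · exact hr
    · refine hr.trans ?_
      simp only [List.mem_cons] at ht
      rcases ht with rfl | rfl | ht
      exacts [ih0 x hxt, ih1 x hxt, ihrest t ht x hxt]

theorem incrFrom_mkWedge {lo r : ℕ} {ts : List LTree} (hr : lo < r)
    (hts : ∀ t ∈ ts, IncrFrom r t) : IncrFrom lo (mkWedge r ts) :=
  match ts with
  | [] => .eps lo
  | [t] => (hts t (by simp)).mono hr.le
  | t0 :: t1 :: rest =>
    .wedge lo r t0 t1 rest hr (hts t0 (by simp)) (hts t1 (by simp))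
      fun t ht => hts t (by simp [ht])

theorem incrFrom_ofWord {lo : ℕ} {w : List ℕ} (hw : ∀ x ∈ w, lo < x) :
    IncrFrom lo (ofWord w) := by
  induction w using ofWord.induct generalizing lo with
  | case1 => exact ofWord_nil ▸ .eps lo
  | case2 w hne ih =>
    rw [ofWord_of_ne_nil hne]
    refine incrFrom_mkWedge (hw _ (List.min_mem hne)) fun t ht => ?_
    obtain ⟨s, hs, rfl⟩ := List.mem_map.mp ht
    obtain ⟨hsub, hmin⟩ := List.sublist_and_not_mem_of_mem_splitOn hs
    exact ih ⟨s, hs⟩ fun x hx =>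
      lt_of_le_of_ne (List.min_le_of_mem (hsub.subset hx)) fun h => hmin (h ▸ hx)

theorem IncrFrom.ofWord_brLevels {lo : ℕ} {t : LTree} (h : IncrFrom lo t) :
    ofWord t.brLevels = t := by
  induction h with
  | eps => simp [brLevels]
  | wedge lo r t0 t1 rest hr h0 h1 hrest ih0 ih1 ihrest =>
    have hgt : ∀ t ∈ t0 :: t1 :: rest, ∀ x ∈ t.brLevels, r < x := by
      simp only [List.mem_cons]
      rintro t (rfl | rfl | ht)
      exacts [h0.lt_of_mem_brLevels, h1.lt_of_mem_brLevels, (hrest t ht).lt_of_mem_brLevels]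
    have hid : ∀ t ∈ t0 :: t1 :: rest, ofWord t.brLevels = t := by
      simp only [List.mem_cons]
      rintro t (rfl | rfl | ht)
      exacts [ih0, ih1, ihrest t ht]
    have hne : (LTree.wedge r t0 t1 rest).brLevels ≠ [] :=
      List.ne_nil_of_mem (mem_brLevels_wedge.mpr (.inl rfl))
    have hmin : (LTree.wedge r t0 t1 rest).brLevels.min hne = r := by
      refine (List.min_eq_iff hne).mpr ⟨mem_brLevels_wedge.mpr (.inl rfl), fun x hx => ?_⟩
      rcases mem_brLevels_wedge.mp hx with rfl | ⟨t, ht, hxt⟩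
      exacts [le_rfl, (hgt t ht x hxt).le]
    have hsplit :
        (LTree.wedge r t0 t1 rest).brLevels.splitOn r = (t0 :: t1 :: rest).map brLevels := by
      rw [brLevels_wedge]
      refine List.splitOn_intercalate r (fun l hl hrl => ?_) (by simp)
      obtain ⟨t, ht, rfl⟩ := List.mem_map.mp hl
      exact lt_irrefl r (hgt t ht r hrl)
    rw [ofWord_of_ne_nil hne, hmin, hsplit, List.map_map,
      List.map_congr_left (f := ofWord ∘ brLevels) (g := id) hid, List.map_id]
    rfl

def IsPackedWord (w : List ℕ) : Prop := ∃ k, w.toFinset = Finset.Icc 1 k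

theorem IsPackedWord.pos {w : List ℕ} (hw : IsPackedWord w) {x : ℕ} (hx : x ∈ w) : 0 < x := by
  obtain ⟨k, hk⟩ := hw
  exact (Finset.mem_Icc.mp (hk ▸ List.mem_toFinset.mpr hx)).1

theorem foldr_max_eq_of_toFinset_eq_Icc {w : List ℕ} {k : ℕ} (h : w.toFinset = Finset.Icc 1 k) :
    w.foldr max 0 = k := by
  have hmem : ∀ x, x ∈ w ↔ 1 ≤ x ∧ x ≤ k := fun x => by
    rw [← List.mem_toFinset, h, Finset.mem_Icc]
  refine le_antisymm (List.max_le_of_forall_le _ _ fun x hx => ((hmem x).mp hx).2) ?_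
  rcases k.eq_zero_or_pos with rfl | hk
  · exact Nat.zero_le _
  · exact List.le_max_of_le ((hmem k).mpr ⟨hk, le_rfl⟩) le_rfl

theorem isIncTree_iff {t : LTree} : IsIncTree t ↔ IncrFrom 0 t ∧ IsPackedWord t.brLevels := by
  have hset : t.levels.toFinset = t.brLevels.toFinset := by
    ext x
    simp only [List.mem_toFinset, mem_levels_iff_mem_brLevels]
  rw [IsIncTree, IsPackedWord, ← hset]
  refine and_congr_right fun _ => ⟨fun h => ⟨_, h⟩, fun ⟨k, hk⟩ => ?_⟩
  rwa [LTree.numLevels, foldr_max_eq_of_toFinset_eq_Icc hk]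

theorem bijOn_brLevels (n : ℕ) :
    Set.BijOn LTree.brLevels {t | IsIncTree t ∧ t.brLevels.length = n}
      {w | IsPackedWord w ∧ w.length = n} := by
  refine Set.InvOn.bijOn (f' := ofWord)
    ⟨fun t ht => (isIncTree_iff.mp ht.1).1.ofWord_brLevels, fun w _ => brLevels_ofWord w⟩ ?_ ?_
  · rintro t ⟨ht, hn⟩
    exact ⟨(isIncTree_iff.mp ht).2, hn⟩
  · rintro w ⟨hw, hn⟩
    simp only [Set.mem_ofPred_eq, isIncTree_iff, brLevels_ofWord]
    exact ⟨⟨incrFrom_ofWord fun x hx => hw.pos hx, hw⟩, hn⟩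

theorem mem_ground {x : ℕ} {L : SC} : x ∈ ground L ↔ ∃ B ∈ L, x ∈ B := by
  induction L with
  | nil => simp [ground]
  | cons B L ih => simp [ground, ← ih]

theorem IsSetComp.mem_Icc {n : ℕ} {L : SC} (hL : IsSetComp n L) {B : Finset ℕ} (hB : B ∈ L)
    {x : ℕ} (hx : x ∈ B) : 1 ≤ x ∧ x ≤ n :=
  Finset.mem_Icc.mp (hL.2.2 ▸ mem_ground.mpr ⟨B, hB, hx⟩)

def letterPositions (w : List ℕ) (i : ℕ) : Finset ℕ :=
  ((List.range w.length).filter (fun j => w.getD j 0 = i + 1)).toFinset.image (· + 1)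

def setCompOfWord (w : List ℕ) : SC := (List.range (w.foldr max 0)).map (letterPositions w)

theorem sigmaOf_eq_comp : sigmaOf = setCompOfWord ∘ LTree.brLevels := rfl

theorem length_setCompOfWord {w : List ℕ} {k : ℕ} (hk : w.toFinset = Finset.Icc 1 k) :
    (setCompOfWord w).length = k := by
  rw [setCompOfWord, List.length_map, List.length_range, foldr_max_eq_of_toFinset_eq_Icc hk]

def wordOfSetComp (n : ℕ) (L : SC) : List ℕ :=
  (List.range n).map fun j => L.findIdx (j + 1 ∈ ·) + 1

@[simp]
theorem length_wordOfSetComp (n : ℕ) (L : SC) : (wordOfSetComp n L).length = n := by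
  rw [wordOfSetComp, List.length_map, List.length_range]

theorem mem_letterPositions {w : List ℕ} {i x : ℕ} :
    x ∈ letterPositions w i ↔ ∃ j, ∃ hj : j < w.length, w[j] = i + 1 ∧ j + 1 = x := by
  simp only [letterPositions, Finset.mem_image, List.mem_toFinset, List.mem_filter,
    List.mem_range, decide_eq_true_eq]
  constructor
  · rintro ⟨j, ⟨hj, hw⟩, rfl⟩
    exact ⟨j, hj, by rwa [List.getD_eq_getElem _ _ hj] at hw, rfl⟩
  · rintro ⟨j, hj, hw, rfl⟩
    exact ⟨j, ⟨hj, by rwa [List.getD_eq_getElem _ _ hj]⟩, rfl⟩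

theorem isSetComp_setCompOfWord {w : List ℕ} (hw : IsPackedWord w) :
    IsSetComp w.length (setCompOfWord w) := by
  obtain ⟨k, hk⟩ := hw
  have hmem : ∀ x, x ∈ w ↔ 1 ≤ x ∧ x ≤ k := fun x => by
    rw [← List.mem_toFinset, hk, Finset.mem_Icc]
  refine ⟨?_, ?_, ?_⟩
  · simp only [setCompOfWord, foldr_max_eq_of_toFinset_eq_Icc hk, List.mem_map, List.mem_range]
    rintro _ ⟨i, hi, rfl⟩
    obtain ⟨j, hj, hwj⟩ := List.mem_iff_getElem.mp ((hmem (i + 1)).mpr ⟨by omega, hi⟩)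
    exact ⟨j + 1, mem_letterPositions.mpr ⟨j, hj, hwj, rfl⟩⟩
  · refine List.pairwise_map.mpr (List.pairwise_lt_range.imp fun {i i'} hii' => ?_)
    refine Finset.disjoint_left.mpr fun x hx hx' => ?_
    obtain ⟨j, hj, hwj, rfl⟩ := mem_letterPositions.mp hx
    obtain ⟨j', hj', hwj', hjj'⟩ := mem_letterPositions.mp hx'
    obtain rfl : j' = j := by omega
    omega
  · ext x
    simp only [mem_ground, setCompOfWord, foldr_max_eq_of_toFinset_eq_Icc hk, List.mem_map,
      List.mem_range, Finset.mem_Icc]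
    constructor
    · rintro ⟨_, ⟨i, _, rfl⟩, hx⟩
      obtain ⟨j, hj, _, rfl⟩ := mem_letterPositions.mp hx
      omega
    · rintro ⟨hx1, hxn⟩
      have hwx := (hmem w[x - 1]).mp (List.getElem_mem (by omega))
      exact ⟨_, ⟨w[x - 1] - 1, by omega, rfl⟩,
        mem_letterPositions.mpr ⟨x - 1, by omega, by omega, by omega⟩⟩

theorem getElem_wordOfSetComp_eq_succ_iff {n : ℕ} {L : SC} (hL : L.Pairwise Disjoint) {i j : ℕ}
    (hj : j < (wordOfSetComp n L).length) (hi : i < L.length) :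
    (wordOfSetComp n L)[j] = i + 1 ↔ j + 1 ∈ L[i] := by
  simp only [wordOfSetComp, List.getElem_map, List.getElem_range, Nat.add_right_cancel_iff,
    List.findIdx_eq hi, decide_eq_true_eq, decide_eq_false_iff_not, and_iff_left_iff_imp]
  exact fun hx i' hi' hx' =>
    Finset.disjoint_left.mp (List.pairwise_iff_getElem.mp hL i' i _ hi hi') hx' hx

theorem toFinset_wordOfSetComp {n : ℕ} {L : SC} (hL : IsSetComp n L) :
    (wordOfSetComp n L).toFinset = Finset.Icc 1 L.length := by
  ext x
  simp only [List.mem_toFinset, Finset.mem_Icc]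
  constructor
  · simp only [wordOfSetComp, List.mem_map, List.mem_range]
    rintro ⟨j, hj, rfl⟩
    have hjL : j + 1 ∈ ground L := by rw [hL.2.2, Finset.mem_Icc]; omega
    obtain ⟨B, hB, hjB⟩ := mem_ground.mp hjL
    have := List.findIdx_lt_length_of_exists (p := (j + 1 ∈ ·)) ⟨B, hB, by simpa using hjB⟩
    omega
  · rintro ⟨hx1, hxL⟩
    obtain ⟨y, hy⟩ := hL.1 L[x - 1] (List.getElem_mem (by omega))
    have hyn := hL.mem_Icc (List.getElem_mem _) hy
    have hlen : y - 1 < (wordOfSetComp n L).length := by rw [length_wordOfSetComp]; omega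
    have := (getElem_wordOfSetComp_eq_succ_iff hL.2.1 hlen (i := x - 1) (by omega)).mpr
      (by rwa [Nat.sub_add_cancel hyn.1])
    exact List.mem_iff_getElem.mpr ⟨y - 1, hlen, by omega⟩

theorem setCompOfWord_wordOfSetComp {n : ℕ} {L : SC} (hL : IsSetComp n L) :
    setCompOfWord (wordOfSetComp n L) = L := by
  refine List.ext_getElem (length_setCompOfWord (toFinset_wordOfSetComp hL)) fun i _ hi => ?_
  ext x
  simp only [setCompOfWord, List.getElem_map, List.getElem_range, mem_letterPositions]
  constructor
  · rintro ⟨j, hj, hwj, rfl⟩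
    exact (getElem_wordOfSetComp_eq_succ_iff hL.2.1 hj hi).mp hwj
  · intro hx
    have hxn := hL.mem_Icc (List.getElem_mem _) hx
    have hj : x - 1 < (wordOfSetComp n L).length := by rw [length_wordOfSetComp]; omega
    refine ⟨x - 1, hj, (getElem_wordOfSetComp_eq_succ_iff hL.2.1 hj hi).mpr ?_, by omega⟩
    rwa [Nat.sub_add_cancel hxn.1]

theorem wordOfSetComp_setCompOfWord {w : List ℕ} (hw : IsPackedWord w) :
    wordOfSetComp w.length (setCompOfWord w) = w := by
  obtain ⟨k, hk⟩ := hw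
  have hC := isSetComp_setCompOfWord ⟨k, hk⟩
  refine List.ext_getElem (length_wordOfSetComp _ _) fun j hj hjw => ?_
  have hwj : w[j] ∈ Finset.Icc 1 k := hk ▸ List.mem_toFinset.mpr (List.getElem_mem hjw)
  rw [Finset.mem_Icc] at hwj
  have hi : w[j] - 1 < (setCompOfWord w).length := by rw [length_setCompOfWord hk]; omega
  have := (getElem_wordOfSetComp_eq_succ_iff hC.2.1 hj hi).mpr <| by
    simp only [setCompOfWord, List.getElem_map, List.getElem_range, mem_letterPositions]
    exact ⟨j, hjw, by omega, rfl⟩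
  omega

theorem bijOn_setCompOfWord (n : ℕ) :
    Set.BijOn setCompOfWord {w | IsPackedWord w ∧ w.length = n} {L | IsSetComp n L} := by
  refine Set.InvOn.bijOn (f' := wordOfSetComp n)
    ⟨?_, fun L hL => setCompOfWord_wordOfSetComp hL⟩ ?_ fun L hL => ?_
  · rintro w ⟨hw, rfl⟩
    exact wordOfSetComp_setCompOfWord hw
  · rintro w ⟨hw, rfl⟩
    exact isSetComp_setCompOfWord hw
  · exact ⟨⟨_, toFinset_wordOfSetComp hL⟩, length_wordOfSetComp n L⟩

/-- **Theorem (bijection).** For every `n ≥ 0`, the map `(T,λ) ↦ σ(T,λ)` is a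
bijection from the set of all increasing trees with `n` branchings onto the set
of all set compositions of `[n]`. -/
theorem sigma_bijection (n : ℕ) :
    Set.BijOn sigmaOf {t : LTree | IsIncTree t ∧ t.brLevels.length = n}
      {L : SC | IsSetComp n L} :=
  sigmaOf_eq_comp ▸ (bijOn_setCompOfWord n).comp (bijOn_brLevels n)
end

section
/- The triple (T_•, ∗̄, δ̂) is a graded connected cocommutative Hopf algebra over ℤ: (T_•, ∗̄) is a graded associative unital algebra, δ̂ is a coassociative cocommutative counital coproduct, δ̂ is an algebra homomorphism from (T_•, ∗̄) to its tensor square equipped with the componentwise product (that is, δ̂(x ∗̄ y) = δ̂(x) · δ̂(y)), the counit (projection onto T_0 ≅ ℤ) is an algebra homomorphism, and, T_• being graded with degree-0 component ℤ, an antipode exists. -/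
set_option linter.unreachableTactic false
set_option linter.unusedTactic false
set_option maxHeartbeats 1000000


open Finset

variable (R : Type) [CommRing R]

/-- The tensor product of two elements of `T_•`, inside `T_• ⊗ T_•`. -/
noncomputable def tensor2 (x y : FM R) : FM2 R :=
  x.sum fun U a => y.sum fun V b => Finsupp.single (U, V) (a * b)

/-- The componentwise product on `T_• ⊗ T_•` induced by the restricted
product `∗̄` : `(a ⊗ b) · (c ⊗ d) = (a ∗̄ c) ⊗ (b ∗̄ d)`. -/
noncomputable def mul2bar : FM2 R →ₗ[R] FM2 R →ₗ[R] FM2 R :=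
  Finsupp.lift _ R (SC × SC) fun PQ => Finsupp.lift _ R (SC × SC) fun RS =>
    Finsupp.single (barMul PQ.1 RS.1, barMul PQ.2 RS.2) 1

/-- The componentwise product on `T_• ⊗ T_•` induced by the symmetrized
product `∗̂` : `(a ⊗ b) · (c ⊗ d) = (a ∗̂ c) ⊗ (b ∗̂ d)`. -/
noncomputable def mul2hat : FM2 R →ₗ[R] FM2 R →ₗ[R] FM2 R :=
  Finsupp.lift _ R (SC × SC) fun PQ => Finsupp.lift _ R (SC × SC) fun RS =>
    tensor2 R (hatB R PQ.1 RS.1) (hatB R PQ.2 RS.2)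

/-- `m ∘ (S ⊗ id)` for the restricted product, used in the antipode axiom. -/
noncomputable def convBarFst (S : FM R →ₗ[R] FM R) : FM2 R →ₗ[R] FM R :=
  Finsupp.lift _ R (SC × SC) fun QR => barL R (S (Finsupp.single QR.1 1)) (Finsupp.single QR.2 1)

/-- `m ∘ (id ⊗ S)` for the restricted product, used in the antipode axiom. -/
noncomputable def convBarSnd (S : FM R →ₗ[R] FM R) : FM2 R →ₗ[R] FM R :=
  Finsupp.lift _ R (SC × SC) fun QR => barL R (Finsupp.single QR.1 1) (S (Finsupp.single QR.2 1))

/-- `m ∘ (S ⊗ id)` for the symmetrized product, used in the antipode axiom. -/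
noncomputable def convHatFst (S : FM R →ₗ[R] FM R) : FM2 R →ₗ[R] FM R :=
  Finsupp.lift _ R (SC × SC) fun QR => hatL R (S (Finsupp.single QR.1 1)) (Finsupp.single QR.2 1)

/-- `m ∘ (id ⊗ S)` for the symmetrized product, used in the antipode axiom. -/
noncomputable def convHatSnd (S : FM R →ₗ[R] FM R) : FM2 R →ₗ[R] FM R :=
  Finsupp.lift _ R (SC × SC) fun QR => hatL R (Finsupp.single QR.1 1) (S (Finsupp.single QR.2 1))

/-!
Restriction `P ↦ P|_A` is functorial (restricting `P|_A` to `A' ⊆ [|A|]` is restricting `P`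
to the subset of `A` relabelled onto `A'`) and compatible with `∗̄` (`(P ∗̄ Q)|_A` is
`P|_{A ∩ [p]} ∗̄ Q|_{A - p}`). Coassociativity and `δ̂(P ∗̄ Q) = δ̂(P) · δ̂(Q)` then come down
to bijections between the index sets of the two sides: pairs `B ⊆ D ⊆ [n]` against pairs
`A ⊆ [n]`, `C ⊆ [n] ∖ A`, and subsets of `[p + q]` against pairs of subsets of `[p]` and
`[q]`. The antipode `S` is defined by the recursion `S ⋆ id = η ∘ ε` on the degree, where `⋆`
is the convolution product; associativity of `⋆` makes it a right inverse of `id` as well.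
-/

section Relabelling

variable {A : Finset ℕ} {x : ℕ}

lemma rankIn_pos (hx : x ∈ A) : 1 ≤ rankIn A x :=
  card_pos.2 ⟨x, mem_filter.2 ⟨hx, le_rfl⟩⟩

lemma rankIn_le_card (A : Finset ℕ) (x : ℕ) : rankIn A x ≤ A.card :=
  card_le_card (filter_subset _ _)

lemma rankIn_mem_Icc (hx : x ∈ A) : rankIn A x ∈ Icc 1 A.card :=
  mem_Icc.2 ⟨rankIn_pos hx, rankIn_le_card A x⟩

lemma rankIn_strictMonoOn (A : Finset ℕ) : StrictMonoOn (rankIn A) A := fun _ _ y hy hxy =>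
  card_lt_card <| (ssubset_iff_of_subset fun _ hz =>
      mem_filter.2 ⟨(mem_filter.1 hz).1, (mem_filter.1 hz).2.trans hxy.le⟩).2
    ⟨y, mem_filter.2 ⟨hy, le_rfl⟩, fun h => (mem_filter.1 h).2.not_gt hxy⟩

lemma rankIn_injOn (A : Finset ℕ) : Set.InjOn (rankIn A) A :=
  (rankIn_strictMonoOn A).injOn

lemma image_rankIn (A : Finset ℕ) : A.image (rankIn A) = Icc 1 A.card := by
  refine eq_of_subset_of_card_le (fun r hr => ?_) ?_
  · obtain ⟨x, hx, rfl⟩ := mem_image.1 hr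
    exact rankIn_mem_Icc hx
  · rw [Nat.card_Icc, card_image_of_injOn (rankIn_injOn A), Nat.add_sub_cancel]

lemma rankIn_Icc_one {n : ℕ} (hx : x ∈ Icc 1 n) : rankIn (Icc 1 n) x = x := by
  have h : (Icc 1 n).filter (· ≤ x) = Icc 1 x := by
    ext y; simp only [mem_filter, mem_Icc] at hx ⊢; omega
  rw [rankIn, h, Nat.card_Icc, Nat.add_sub_cancel]

end Relabelling

section Ground

lemma ground_map (f : Finset ℕ → Finset ℕ) (hf : ∀ s t, f (s ∪ t) = f s ∪ f t)
    (h0 : f ∅ = ∅) (L : SC) : ground (L.map f) = f (ground L) := by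
  induction L with
  | nil => exact h0.symm
  | cons B L ih => simp only [ground, List.foldr_cons, List.map_cons] at ih ⊢; rw [ih, hf]

lemma ground_append (L₁ L₂ : SC) : ground (L₁ ++ L₂) = ground L₁ ∪ ground L₂ := by
  induction L₁ with
  | nil => exact (empty_union _).symm
  | cons B L ih =>
    simp only [ground, List.cons_append, List.foldr_cons] at ih ⊢
    rw [ih, union_assoc]

lemma subset_ground {L : SC} {B : Finset ℕ} (hB : B ∈ L) : B ⊆ ground L := by
  induction L with
  | nil => simp at hB
  | cons C L ih =>
    simp only [ground, List.foldr_cons] at ih ⊢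
    rcases List.mem_cons.1 hB with rfl | h
    · exact subset_union_left
    · exact (ih h).trans subset_union_right

lemma ground_filter_nonempty (L : SC) :
    ground (L.filter fun B => decide B.Nonempty) = ground L := by
  induction L with
  | nil => rfl
  | cons B L ih =>
    rcases B.eq_empty_or_nonempty with rfl | hB
    · simpa [ground] using ih
    · simp only [ground] at ih
      simp [ground, hB, ih]

lemma ground_restrictSC (A : Finset ℕ) (L : SC) :
    ground (restrictSC A L) = (ground L ∩ A).image (rankIn A) := by
  rw [restrictSC, ground_filter_nonempty,
    ground_map _ (fun s t => by rw [union_inter_distrib_right, image_union]) (by simp)]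

lemma ground_shiftSC (p : ℕ) (L : SC) : ground (shiftSC p L) = (ground L).image (· + p) :=
  ground_map _ (fun _ _ => image_union _ _) (image_empty _) L

end Ground

section SetCompositions

variable {n : ℕ} {P : SC}

lemma maxG_eq_of_isSetComp (hP : IsSetComp n P) : maxG P = n := by
  rw [maxG, hP.2.2]
  rcases n.eq_zero_or_pos with rfl | hn
  · rfl
  · exact le_antisymm (Finset.sup_le fun x hx => (mem_Icc.1 hx).2)
      (le_sup (f := id) (mem_Icc.2 ⟨hn, le_rfl⟩))

lemma eq_nil_of_isSetComp_zero (hP : IsSetComp 0 P) : P = [] := by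
  cases P with
  | nil => rfl
  | cons B L =>
    obtain ⟨x, hx⟩ := hP.1 B List.mem_cons_self
    have h : x ∈ ground (B :: L) := subset_ground List.mem_cons_self hx
    simp [hP.2.2] at h

lemma isSetComp_restrictSC (hP : IsSetComp n P) {A : Finset ℕ} (hA : A ⊆ Icc 1 n) :
    IsSetComp A.card (restrictSC A P) := by
  obtain ⟨-, hdisj, hgr⟩ := hP
  refine ⟨fun B hB => by simpa using List.of_mem_filter hB, ?_, ?_⟩
  · refine List.Pairwise.filter _ (List.pairwise_map.2 (hdisj.imp fun hBC => ?_))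
    refine disjoint_left.2 fun r hr hr' => ?_
    obtain ⟨a, ha, rfl⟩ := mem_image.1 hr
    obtain ⟨b, hb, hab⟩ := mem_image.1 hr'
    rw [mem_inter] at ha hb
    exact disjoint_left.1 hBC ha.1 (rankIn_injOn A hb.2 ha.2 hab ▸ hb.1)
  · rw [ground_restrictSC, hgr, inter_eq_right.2 hA, image_rankIn]

lemma maxG_restrictSC_le (A : Finset ℕ) (L : SC) : maxG (restrictSC A L) ≤ A.card := by
  rw [maxG, ground_restrictSC]
  refine Finset.sup_le fun r hr => ?_
  obtain ⟨x, -, rfl⟩ := mem_image.1 hr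
  exact rankIn_le_card A x

lemma restrictSC_empty (L : SC) : restrictSC ∅ L = [] :=
  List.filter_eq_nil_iff.2 fun B hB => by
    obtain ⟨C, -, rfl⟩ := List.mem_map.1 hB
    simp

lemma restrictSC_eq_nil_iff (hP : IsSetComp n P) {A : Finset ℕ} (hA : A ⊆ Icc 1 n) :
    restrictSC A P = [] ↔ A = ∅ := by
  refine ⟨fun h => ?_, fun h => h ▸ restrictSC_empty P⟩
  have hgr := (isSetComp_restrictSC hP hA).2.2
  rw [h] at hgr
  exact card_eq_zero.1 (Nat.lt_one_iff.1 (by simpa [ground] using congrArg (1 ∈ ·) hgr))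

lemma restrictSC_Icc (hP : IsSetComp n P) : restrictSC (Icc 1 n) P = P := by
  obtain ⟨hne, -, hgr⟩ := hP
  have hmap : P.map (fun B => (B ∩ Icc 1 n).image (rankIn (Icc 1 n))) = P := by
    refine (List.map_congr_left fun B hB => ?_).trans (List.map_id' P)
    have hB : B ⊆ Icc 1 n := hgr ▸ subset_ground hB
    rw [inter_eq_left.2 hB, image_congr fun x hx => rankIn_Icc_one (hB hx), image_id']
  rw [restrictSC, hmap, List.filter_eq_self]
  exact fun B hB => by simpa using hne B hB

end SetCompositions

section RestrictedProduct

lemma shiftSC_zero (L : SC) : shiftSC 0 L = L := by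
  rw [shiftSC]
  exact (List.map_congr_left fun B _ => by simp).trans (List.map_id' L)

lemma shiftSC_shiftSC (p q : ℕ) (L : SC) : shiftSC p (shiftSC q L) = shiftSC (p + q) L := by
  simp only [shiftSC, List.map_map]
  refine List.map_congr_left fun B _ => ?_
  simp only [Function.comp_apply, image_image]
  exact image_congr fun x _ => by simp only [Function.comp_apply]; omega

lemma shiftSC_append (p : ℕ) (L₁ L₂ : SC) :
    shiftSC p (L₁ ++ L₂) = shiftSC p L₁ ++ shiftSC p L₂ :=
  List.map_append

lemma maxG_barMul (P Q : SC) : maxG (barMul P Q) = maxG P + maxG Q := by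
  rw [barMul, maxG, ground_append, ground_shiftSC, sup_union, sup_image]
  rcases (ground Q).eq_empty_or_nonempty with h | h
  · simp [h, maxG]
  · obtain ⟨b, hb, hbmax⟩ := exists_mem_eq_sup (ground Q) h id
    have hsup : (ground Q).sup (id ∘ (· + maxG P)) = maxG Q + maxG P :=
      le_antisymm (Finset.sup_le fun x hx => Nat.add_le_add_right (le_sup (f := id) hx) _)
        (by rw [maxG, hbmax]; exact le_sup (f := id ∘ (· + maxG P)) hb)
    rw [hsup]
    exact (max_eq_right (Nat.le_add_left _ _)).trans (add_comm _ _)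

lemma barMul_assoc (P Q U : SC) : barMul (barMul P Q) U = barMul P (barMul Q U) := by
  have h := maxG_barMul P Q
  simp only [barMul] at h ⊢
  rw [h, List.append_assoc, shiftSC_append, shiftSC_shiftSC]

lemma barMul_nil_left (Q : SC) : barMul [] Q = Q := by
  rw [barMul, show maxG [] = 0 from rfl, shiftSC_zero, List.nil_append]

lemma barMul_nil_right (P : SC) : barMul P [] = P := List.append_nil P

lemma barMul_eq_nil_iff {P Q : SC} : barMul P Q = [] ↔ P = [] ∧ Q = [] := by
  rw [barMul, shiftSC, List.append_eq_nil_iff, List.map_eq_nil_iff]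

lemma isSetComp_barMul {p q : ℕ} {P Q : SC} (hP : IsSetComp p P) (hQ : IsSetComp q Q) :
    IsSetComp (p + q) (barMul P Q) := by
  obtain ⟨hPne, hPd, hPg⟩ := hP
  obtain ⟨hQne, hQd, hQg⟩ := hQ
  have hp : maxG P = p := maxG_eq_of_isSetComp ⟨hPne, hPd, hPg⟩
  refine ⟨fun B hB => ?_, List.pairwise_append.2 ⟨hPd, ?_, fun B hB C hC => ?_⟩, ?_⟩
  · rcases List.mem_append.1 hB with h | h
    · exact hPne B h
    · obtain ⟨C, hC, rfl⟩ := List.mem_map.1 h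
      exact (hQne C hC).image _
  · exact List.pairwise_map.2 (hQd.imp fun h => (disjoint_image (add_left_injective _)).2 h)
  · obtain ⟨D, hD, rfl⟩ := List.mem_map.1 hC
    refine disjoint_left.2 fun x hx hx' => ?_
    obtain ⟨y, hy, rfl⟩ := mem_image.1 hx'
    have h1 := (mem_Icc.1 ((hPg ▸ subset_ground hB) hx)).2
    have h2 := (mem_Icc.1 ((hQg ▸ subset_ground hD) hy)).1
    omega
  · rw [barMul, ground_append, ground_shiftSC, hPg, hQg, hp]
    ext x
    simp only [mem_union, mem_image, mem_Icc]
    constructor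
    · rintro (h | ⟨y, hy, rfl⟩) <;> omega
    · exact fun h => (le_or_gt x p).imp (fun hx => ⟨h.1, hx⟩)
        fun hx => ⟨x - p, by omega, by omega⟩

end RestrictedProduct

section IteratedRestriction

def liftSet (A A' : Finset ℕ) : Finset ℕ := A.filter (rankIn A · ∈ A')

variable {A A' : Finset ℕ}

lemma liftSet_subset (A A' : Finset ℕ) : liftSet A A' ⊆ A := filter_subset _ _

lemma image_rankIn_liftSet (hA' : A' ⊆ Icc 1 A.card) :
    (liftSet A A').image (rankIn A) = A' := by
  refine subset_antisymm (fun r hr => ?_) fun r hr => ?_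
  · obtain ⟨x, hx, rfl⟩ := mem_image.1 hr
    exact (mem_filter.1 hx).2
  · have hr' : r ∈ A.image (rankIn A) := (image_rankIn A).symm ▸ hA' hr
    obtain ⟨x, hx, rfl⟩ := mem_image.1 hr'
    exact mem_image_of_mem _ (mem_filter.2 ⟨hx, hr⟩)

lemma liftSet_image_rankIn {B : Finset ℕ} (hB : B ⊆ A) :
    liftSet A (B.image (rankIn A)) = B := by
  ext x
  simp only [liftSet, mem_filter, mem_image]
  exact ⟨fun ⟨hx, b, hb, hbx⟩ => rankIn_injOn A (hB hb) hx hbx ▸ hb,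
    fun hx => ⟨hB hx, x, hx, rfl⟩⟩

lemma liftSet_sdiff : liftSet A (Icc 1 A.card \ A') = A \ liftSet A A' := by
  ext x
  simp only [liftSet, mem_filter, mem_sdiff]
  exact ⟨fun ⟨hx, _, hr⟩ => ⟨hx, fun h => hr h.2⟩,
    fun ⟨hx, hr⟩ => ⟨hx, rankIn_mem_Icc hx, fun h => hr ⟨hx, h⟩⟩⟩

lemma rankIn_rankIn (hA' : A' ⊆ Icc 1 A.card) {x : ℕ} (hx : x ∈ liftSet A A') :
    rankIn A' (rankIn A x) = rankIn (liftSet A A') x := by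
  have hsub := liftSet_subset A A'
  have key : A'.filter (· ≤ rankIn A x)
      = ((liftSet A A').filter (· ≤ x)).image (rankIn A) := by
    conv_lhs => rw [← image_rankIn_liftSet hA']
    rw [filter_image]
    exact congrArg _ <| filter_congr fun y hy =>
      (rankIn_strictMonoOn A).le_iff_le (hsub hy) (hsub hx)
  rw [rankIn, key,
    card_image_of_injOn ((rankIn_injOn A).mono fun y hy => hsub (mem_filter.1 hy).1)]
  rfl

lemma filter_nonempty_map_filter_nonempty (L : SC) (g g' : Finset ℕ → Finset ℕ)
    (hg' : g' ∅ = ∅) :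
    (((L.map g).filter fun B => decide B.Nonempty).map g').filter (fun B => decide B.Nonempty)
      = (L.map (g' ∘ g)).filter fun B => decide B.Nonempty := by
  induction L with
  | nil => rfl
  | cons B L ih =>
    rcases (g B).eq_empty_or_nonempty with h | h <;> simp [h, hg', List.filter_cons, ih]

lemma restrictSC_restrictSC (hA' : A' ⊆ Icc 1 A.card) (L : SC) :
    restrictSC A' (restrictSC A L) = restrictSC (liftSet A A') L := by
  rw [restrictSC, restrictSC, restrictSC, filter_nonempty_map_filter_nonempty _ _ _ (by simp)]
  refine congrArg _ (List.map_congr_left fun B _ => ?_)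
  have h : (B ∩ A).image (rankIn A) ∩ A' = (B ∩ liftSet A A').image (rankIn A) := by
    ext r
    simp only [mem_inter, mem_image, liftSet, mem_filter]
    exact ⟨fun ⟨⟨y, ⟨hyB, hyA⟩, hyr⟩, hr⟩ => ⟨y, ⟨hyB, hyA, hyr ▸ hr⟩, hyr⟩,
      fun ⟨y, ⟨hyB, hyA, hy⟩, hyr⟩ => ⟨⟨y, ⟨hyB, hyA⟩, hyr⟩, hyr ▸ hy⟩⟩
  rw [Function.comp_apply, h, image_image]
  exact image_congr fun x hx => rankIn_rankIn hA' (mem_inter.1 hx).2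

lemma sum_restrictSC_restrictSC {M : Type*} [AddCommMonoid M] {n : ℕ} {P : SC}
    (hP : IsSetComp n P) {D : Finset ℕ} (hD : D ⊆ Icc 1 n) (F : SC → SC → M) :
    ∑ A ∈ (Icc 1 (maxG (restrictSC D P))).powerset,
        F (restrictSC A (restrictSC D P))
          (restrictSC (Icc 1 (maxG (restrictSC D P)) \ A) (restrictSC D P))
      = ∑ B ∈ D.powerset, F (restrictSC B P) (restrictSC (D \ B) P) := by
  rw [maxG_eq_of_isSetComp (isSetComp_restrictSC hP hD)]
  refine sum_nbij' (liftSet D) (image (rankIn D))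
    (fun A' _ => mem_powerset.2 (liftSet_subset D A')) (fun B hB => mem_powerset.2 ?_)
    (fun A' hA' => image_rankIn_liftSet (mem_powerset.1 hA'))
    (fun B hB => liftSet_image_rankIn (mem_powerset.1 hB)) (fun A' hA' => ?_)
  · rw [← image_rankIn D]
    exact image_subset_image (mem_powerset.1 hB)
  · have hA' := mem_powerset.1 hA'
    rw [restrictSC_restrictSC hA', restrictSC_restrictSC sdiff_subset, liftSet_sdiff]

end IteratedRestriction

section RestrictionOfProducts

def lowPart (p : ℕ) (A : Finset ℕ) : Finset ℕ := A.filter (· ≤ p)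

def highPart (p : ℕ) (A : Finset ℕ) : Finset ℕ := (A.filter (p < ·)).image (· - p)

variable {p q : ℕ} {A : Finset ℕ}

lemma mem_lowPart {x : ℕ} : x ∈ lowPart p A ↔ x ∈ A ∧ x ≤ p := mem_filter

lemma mem_highPart {y : ℕ} : y ∈ highPart p A ↔ 0 < y ∧ y + p ∈ A := by
  simp only [highPart, mem_image, mem_filter]
  exact ⟨fun ⟨x, ⟨hx, hpx⟩, hxy⟩ => ⟨by omega, by rwa [← hxy, Nat.sub_add_cancel hpx.le]⟩,
    fun ⟨hy, hyA⟩ => ⟨y + p, ⟨hyA, by omega⟩, by omega⟩⟩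

lemma lowPart_subset (hA : A ⊆ Icc 1 (p + q)) : lowPart p A ⊆ Icc 1 p := fun x hx => by
  have := mem_Icc.1 (hA (mem_lowPart.1 hx).1)
  exact mem_Icc.2 ⟨this.1, (mem_lowPart.1 hx).2⟩

lemma highPart_subset (hA : A ⊆ Icc 1 (p + q)) : highPart p A ⊆ Icc 1 q := fun y hy => by
  have := mem_Icc.1 (hA (mem_highPart.1 hy).2)
  exact mem_Icc.2 ⟨(mem_highPart.1 hy).1, by omega⟩

lemma lowPart_sdiff : lowPart p (Icc 1 (p + q) \ A) = Icc 1 p \ lowPart p A := by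
  ext x
  simp only [mem_lowPart, mem_sdiff, mem_Icc]
  grind

lemma highPart_sdiff : highPart p (Icc 1 (p + q) \ A) = Icc 1 q \ highPart p A := by
  ext y
  simp only [mem_highPart, mem_sdiff, mem_Icc]
  grind

lemma lowPart_union_image_highPart (hA : A ⊆ Icc 1 (p + q)) :
    lowPart p A ∪ (highPart p A).image (· + p) = A := by
  ext x
  simp only [mem_union, mem_lowPart, mem_image, mem_highPart]
  refine ⟨fun h => h.elim And.left fun ⟨y, ⟨_, hy⟩, hyx⟩ => hyx ▸ hy, fun hx => ?_⟩
  have := (mem_Icc.1 (hA hx)).1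
  exact (le_or_gt x p).imp (fun h => ⟨hx, h⟩)
    fun h => ⟨x - p, ⟨by omega, by rwa [Nat.sub_add_cancel h.le]⟩, by omega⟩

lemma lowPart_union_image {A' B' : Finset ℕ} (hA' : A' ⊆ Icc 1 p) (hB' : B' ⊆ Icc 1 q) :
    lowPart p (A' ∪ B'.image (· + p)) = A' := by
  ext x
  simp only [mem_lowPart, mem_union, mem_image]
  refine ⟨fun ⟨h, hx⟩ => h.resolve_right fun ⟨y, hy, hyx⟩ => ?_,
    fun hx => ⟨Or.inl hx, (mem_Icc.1 (hA' hx)).2⟩⟩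
  have := (mem_Icc.1 (hB' hy)).1
  omega

lemma highPart_union_image {A' B' : Finset ℕ} (hA' : A' ⊆ Icc 1 p) (hB' : B' ⊆ Icc 1 q) :
    highPart p (A' ∪ B'.image (· + p)) = B' := by
  ext y
  simp only [mem_highPart, mem_union, mem_image, add_left_inj, exists_eq_right]
  refine ⟨fun ⟨hy, h⟩ => h.resolve_left fun h' => ?_,
    fun hy => ⟨(mem_Icc.1 (hB' hy)).1, Or.inr hy⟩⟩
  have := (mem_Icc.1 (hA' h')).2
  omega

lemma union_image_subset {A' B' : Finset ℕ} (hA' : A' ⊆ Icc 1 p) (hB' : B' ⊆ Icc 1 q) :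
    A' ∪ B'.image (· + p) ⊆ Icc 1 (p + q) := by
  refine union_subset (fun x hx => ?_) fun x hx => ?_
  · have := mem_Icc.1 (hA' hx)
    exact mem_Icc.2 ⟨this.1, by omega⟩
  · obtain ⟨y, hy, rfl⟩ := mem_image.1 hx
    have := mem_Icc.1 (hB' hy)
    exact mem_Icc.2 ⟨by omega, by omega⟩

lemma rankIn_eq_rankIn_lowPart {x : ℕ} (hx : x ≤ p) : rankIn A x = rankIn (lowPart p A) x := by
  rw [rankIn, rankIn, lowPart, filter_filter]
  exact congrArg card (filter_congr fun y _ => ⟨fun h => ⟨h.trans hx, h⟩, And.right⟩)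

lemma rankIn_add_highPart {y : ℕ} (hy : 0 < y) :
    rankIn A (y + p) = (lowPart p A).card + rankIn (highPart p A) y := by
  have hsplit : A.filter (· ≤ y + p)
      = lowPart p A ∪ ((highPart p A).filter (· ≤ y)).image (· + p) := by
    ext x
    simp only [mem_filter, mem_union, mem_lowPart, mem_image, mem_highPart]
    refine ⟨fun ⟨hx, hxy⟩ => (le_or_gt x p).imp (fun h => ⟨hx, h⟩) fun h =>
      ⟨x - p, ⟨⟨by omega, by rwa [Nat.sub_add_cancel h.le]⟩, by omega⟩, by omega⟩, ?_⟩
    rintro (⟨hx, hxp⟩ | ⟨z, ⟨⟨_, hz⟩, hzy⟩, rfl⟩)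
    · exact ⟨hx, by omega⟩
    · exact ⟨hz, by omega⟩
  have hdisj : Disjoint (lowPart p A) (((highPart p A).filter (· ≤ y)).image (· + p)) :=
    disjoint_left.2 fun x hx hx' => by
      obtain ⟨z, hz, rfl⟩ := mem_image.1 hx'
      have := (mem_lowPart.1 hx).2
      have := (mem_highPart.1 (mem_filter.1 hz).1).1
      omega
  rw [rankIn, hsplit, card_union_of_disjoint hdisj,
    card_image_of_injective _ (add_left_injective p)]
  rfl

lemma restrictSC_append (A : Finset ℕ) (L₁ L₂ : SC) :
    restrictSC A (L₁ ++ L₂) = restrictSC A L₁ ++ restrictSC A L₂ := by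
  rw [restrictSC, restrictSC, restrictSC, List.map_append, List.filter_append]

lemma restrictSC_eq_restrictSC_lowPart {L : SC} (hL : ground L ⊆ Icc 1 p) (A : Finset ℕ) :
    restrictSC A L = restrictSC (lowPart p A) L := by
  refine congrArg _ (List.map_congr_left fun B hB => ?_)
  have hBp : B ⊆ Icc 1 p := (subset_ground hB).trans hL
  have hBA : B ∩ A = B ∩ lowPart p A := by
    ext x
    simp only [mem_inter, mem_lowPart]
    exact ⟨fun ⟨h, h'⟩ => ⟨h, h', (mem_Icc.1 (hBp h)).2⟩, fun ⟨h, h', _⟩ => ⟨h, h'⟩⟩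
  rw [hBA]
  exact image_congr fun x hx => rankIn_eq_rankIn_lowPart (mem_Icc.1 (hBp (mem_inter.1 hx).1)).2

lemma restrictSC_shiftSC {L : SC} (hL : ground L ⊆ Icc 1 q) (A : Finset ℕ) :
    restrictSC A (shiftSC p L) = shiftSC (lowPart p A).card (restrictSC (highPart p A) L) := by
  have himage : ∀ C ∈ L, ((fun B => (B ∩ A).image (rankIn A)) ∘ image (· + p)) C
      = (image (· + (lowPart p A).card) ∘
          fun C => (C ∩ highPart p A).image (rankIn (highPart p A))) C := by
    intro C hC
    have hCq : C ⊆ Icc 1 q := (subset_ground hC).trans hL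
    have hinter : C.image (· + p) ∩ A = (C ∩ highPart p A).image (· + p) := by
      ext x
      simp only [mem_inter, mem_image, mem_highPart]
      exact ⟨fun ⟨⟨y, hy, hyx⟩, hx⟩ => ⟨y, ⟨hy, (mem_Icc.1 (hCq hy)).1, hyx ▸ hx⟩, hyx⟩,
        fun ⟨y, ⟨hy, _, hyA⟩, hyx⟩ => ⟨⟨y, hy, hyx⟩, hyx ▸ hyA⟩⟩
    rw [Function.comp_apply, Function.comp_apply, hinter, image_image, image_image]
    refine image_congr fun y hy => ?_
    rw [Function.comp_apply, Function.comp_apply,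
      rankIn_add_highPart (mem_highPart.1 (mem_inter.1 hy).2).1, add_comm]
  rw [restrictSC, shiftSC, List.map_map, List.map_congr_left himage, shiftSC, restrictSC,
    ← List.map_map, List.filter_map]
  exact congrArg _ (List.filter_congr fun B _ => by simp)

lemma restrictSC_barMul {P Q : SC} (hP : IsSetComp p P) (hQ : IsSetComp q Q)
    (hA : A ⊆ Icc 1 (p + q)) :
    restrictSC A (barMul P Q)
      = barMul (restrictSC (lowPart p A) P) (restrictSC (highPart p A) Q) := by
  rw [barMul, barMul, maxG_eq_of_isSetComp hP, restrictSC_append,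
    restrictSC_eq_restrictSC_lowPart hP.2.2.le, restrictSC_shiftSC hQ.2.2.le,
    maxG_eq_of_isSetComp (isSetComp_restrictSC hP (lowPart_subset hA))]

end RestrictionOfProducts

section PowersetSums

variable {α M : Type*} [DecidableEq α] [AddCommMonoid M]

lemma sum_powerset_sdiff (S : Finset α) (f : Finset α → M) :
    ∑ A ∈ S.powerset, f (S \ A) = ∑ A ∈ S.powerset, f A :=
  sum_nbij' (S \ ·) (S \ ·) (fun _ _ => mem_powerset.2 sdiff_subset)
    (fun _ _ => mem_powerset.2 sdiff_subset)
    (fun _ hA => Finset.sdiff_sdiff_eq_self (mem_powerset.1 hA))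
    (fun _ hA => Finset.sdiff_sdiff_eq_self (mem_powerset.1 hA)) fun _ _ => rfl

/-- Both sides sum over the decompositions `S = A ⊔ C ⊔ E` into three blocks. -/
lemma sum_powerset_sum_powerset (S : Finset α) (f : Finset α → Finset α → Finset α → M) :
    ∑ D ∈ S.powerset, ∑ B ∈ D.powerset, f B (D \ B) (S \ D)
      = ∑ A ∈ S.powerset, ∑ C ∈ (S \ A).powerset, f A C ((S \ A) \ C) := by
  rw [sum_sigma', sum_sigma']
  refine sum_nbij' (fun x => ⟨x.2, x.1 \ x.2⟩) (fun y => ⟨y.1 ∪ y.2, y.1⟩) ?_ ?_ ?_ ?_ ?_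
  · rintro ⟨D, B⟩ h
    simp only [mem_sigma, mem_powerset] at h ⊢
    exact ⟨h.2.trans h.1, sdiff_subset_sdiff h.1 le_rfl⟩
  · rintro ⟨A, C⟩ h
    simp only [mem_sigma, mem_powerset] at h ⊢
    exact ⟨union_subset h.1 (h.2.trans sdiff_subset), subset_union_left⟩
  · rintro ⟨D, B⟩ h
    simp only [mem_sigma, mem_powerset] at h
    simp only [union_sdiff_of_subset h.2]
  · rintro ⟨A, C⟩ h
    simp only [mem_sigma, mem_powerset] at h
    simp only [union_sdiff_cancel_left (disjoint_of_subset_right h.2 disjoint_sdiff)]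
  · rintro ⟨D, B⟩ h
    simp only [mem_sigma, mem_powerset] at h
    rw [sdiff_sdiff_left, sup_eq_union, union_sdiff_of_subset h.2]

end PowersetSums

section LinearStructure

variable {R}

lemma lift_single {α M : Type*} [AddCommMonoid M] [Module R M] (f : α → M) (a : α) (b : R) :
    Finsupp.lift M R α f (Finsupp.single a b) = b • f a := by
  rw [Finsupp.lift_apply, Finsupp.sum_single_index (zero_smul R (f a))]

lemma lift_single_one {α M : Type*} [AddCommMonoid M] [Module R M] (f : α → M) (a : α) :
    Finsupp.lift M R α f (Finsupp.single a 1) = f a := by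
  rw [lift_single, one_smul]

lemma barL_single_single (P Q : SC) (a b : R) :
    barL R (Finsupp.single P a) (Finsupp.single Q b) = Finsupp.single (barMul P Q) (a * b) := by
  rw [barL, lift_single, LinearMap.smul_apply, lift_single, Finsupp.smul_single_one,
    Finsupp.smul_single, smul_eq_mul]

lemma barL_single_nil (x : FM R) : barL R (Finsupp.single [] 1) x = x := by
  induction x using Finsupp.induction_linear with
  | zero => exact map_zero _
  | add x y hx hy => rw [map_add, hx, hy]
  | single Q b => rw [barL_single_single, barMul_nil_left, one_mul]

lemma barL_apply_single_nil (x : FM R) : barL R x (Finsupp.single [] 1) = x := by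
  induction x using Finsupp.induction_linear with
  | zero => rw [map_zero, LinearMap.zero_apply]
  | add x y hx hy => rw [map_add, LinearMap.add_apply, hx, hy]
  | single P a => rw [barL_single_single, barMul_nil_right, mul_one]

lemma barL_assoc (x y z : FM R) : barL R (barL R x y) z = barL R x (barL R y z) := by
  induction x using Finsupp.induction_linear with
  | zero => simp
  | add x x' hx hx' => simp only [map_add, LinearMap.add_apply, hx, hx']
  | single P a =>
    induction y using Finsupp.induction_linear with
    | zero => simp
    | add y y' hy hy' => simp only [map_add, LinearMap.add_apply, hy, hy']
    | single Q b =>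
      induction z using Finsupp.induction_linear with
      | zero => simp
      | add z z' hz hz' => simp only [map_add, hz, hz']
      | single U c => simp only [barL_single_single, barMul_assoc, mul_assoc]

lemma dHatL_single (P : SC) :
    dHatL R (Finsupp.single P 1) = ∑ A ∈ (Icc 1 (maxG P)).powerset,
      Finsupp.single (restrictSC A P, restrictSC (Icc 1 (maxG P) \ A) P) 1 :=
  lift_single_one _ _

lemma mul2bar_single (P Q U V : SC) :
    mul2bar R (Finsupp.single (P, Q) 1) (Finsupp.single (U, V) 1)
      = Finsupp.single (barMul P U, barMul Q V) 1 := by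
  rw [mul2bar, lift_single_one, lift_single_one]

lemma counitL_single (P : SC) : counitL R (Finsupp.single P 1) = if P = [] then 1 else 0 :=
  lift_single_one _ _

lemma counitL_barMul (P Q : SC) :
    counitL R (Finsupp.single (barMul P Q) 1)
      = counitL R (Finsupp.single P 1) * counitL R (Finsupp.single Q 1) := by
  simp only [counitL_single, barMul_eq_nil_iff, ite_and, ite_mul, one_mul, zero_mul]

end LinearStructure

section Coalgebra

variable {R} {n : ℕ} {P : SC}

lemma dHatL_restrictSC (hP : IsSetComp n P) {D : Finset ℕ} (hD : D ⊆ Icc 1 n) :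
    dHatL R (Finsupp.single (restrictSC D P) 1)
      = ∑ B ∈ D.powerset, Finsupp.single (restrictSC B P, restrictSC (D \ B) P) 1 := by
  rw [dHatL_single, sum_restrictSC_restrictSC hP hD fun X Y => Finsupp.single (X, Y) (1 : R)]

lemma dHatL_coassoc (hP : IsSetComp n P) :
    applyFst R (dHatL R) (dHatL R (Finsupp.single P 1))
      = applySnd R (dHatL R) (dHatL R (Finsupp.single P 1)) := by
  rw [dHatL_single, maxG_eq_of_isSetComp hP, map_sum, map_sum]
  calc _ = ∑ D ∈ (Icc 1 n).powerset, ∑ B ∈ D.powerset, Finsupp.single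
          (restrictSC B P, restrictSC (D \ B) P, restrictSC (Icc 1 n \ D) P) (1 : R) := by
        refine sum_congr rfl fun D hD => ?_
        rw [applyFst, lift_single_one, dHatL_restrictSC hP (mem_powerset.1 hD),
          Finsupp.mapDomain_finsetSum]
        simp only [Finsupp.mapDomain_single]
    _ = ∑ A ∈ (Icc 1 n).powerset, ∑ C ∈ (Icc 1 n \ A).powerset,
          Finsupp.single
            (restrictSC A P, restrictSC C P, restrictSC ((Icc 1 n \ A) \ C) P) (1 : R) :=
        sum_powerset_sum_powerset _ fun B C E => Finsupp.single
          (restrictSC B P, restrictSC C P, restrictSC E P) 1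
    _ = _ := by
        refine sum_congr rfl fun A _ => ?_
        rw [applySnd, lift_single_one, dHatL_restrictSC hP sdiff_subset,
          Finsupp.mapDomain_finsetSum]
        simp only [Finsupp.mapDomain_single]

lemma twistL_dHatL (hP : IsSetComp n P) :
    twistL R (dHatL R (Finsupp.single P 1)) = dHatL R (Finsupp.single P 1) := by
  rw [dHatL_single, maxG_eq_of_isSetComp hP, map_sum,
    ← sum_powerset_sdiff (Icc 1 n) fun A =>
      Finsupp.single (restrictSC A P, restrictSC (Icc 1 n \ A) P) 1]
  refine sum_congr rfl fun A hA => ?_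
  rw [twistL, lift_single_one, Finset.sdiff_sdiff_eq_self (mem_powerset.1 hA)]

lemma epsFst_dHatL (hP : IsSetComp n P) :
    epsFst R (dHatL R (Finsupp.single P 1)) = Finsupp.single P 1 := by
  rw [dHatL_single, maxG_eq_of_isSetComp hP, map_sum,
    sum_eq_single_of_mem ∅ (empty_mem_powerset _) fun A hA hne => ?_]
  · rw [epsFst, lift_single_one, restrictSC_empty, if_pos rfl, sdiff_empty, restrictSC_Icc hP]
  · rw [epsFst, lift_single_one,
      if_neg (mt (restrictSC_eq_nil_iff hP (mem_powerset.1 hA)).1 hne)]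

lemma epsSnd_twistL (x : FM2 R) : epsSnd R (twistL R x) = epsFst R x := by
  induction x using Finsupp.induction_linear with
  | zero => rw [map_zero, map_zero, map_zero]
  | add x y hx hy => rw [map_add, map_add, map_add, hx, hy]
  | single PQ a =>
    rw [← Finsupp.smul_single_one, map_smul, map_smul, map_smul, twistL, lift_single_one, epsSnd,
      lift_single_one, epsFst, lift_single_one]

lemma epsSnd_dHatL (hP : IsSetComp n P) :
    epsSnd R (dHatL R (Finsupp.single P 1)) = Finsupp.single P 1 := by
  rw [← twistL_dHatL hP, epsSnd_twistL, epsFst_dHatL hP]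

end Coalgebra

section Bialgebra

variable {R} {p q : ℕ}

lemma sum_powerset_Icc_add {M : Type*} [AddCommMonoid M] (f : Finset ℕ → Finset ℕ → M) :
    ∑ A ∈ (Icc 1 (p + q)).powerset, f (lowPart p A) (highPart p A)
      = ∑ A' ∈ (Icc 1 p).powerset, ∑ B' ∈ (Icc 1 q).powerset, f A' B' := by
  rw [← sum_product']
  refine sum_nbij' (fun A => (lowPart p A, highPart p A)) (fun x => x.1 ∪ x.2.image (· + p))
    (fun A hA => ?_) (fun x hx => ?_) (fun A hA => ?_) (fun x hx => ?_) fun _ _ => rfl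
  · exact mem_product.2 ⟨mem_powerset.2 (lowPart_subset (mem_powerset.1 hA)),
      mem_powerset.2 (highPart_subset (mem_powerset.1 hA))⟩
  · obtain ⟨h1, h2⟩ := mem_product.1 hx
    exact mem_powerset.2 (union_image_subset (mem_powerset.1 h1) (mem_powerset.1 h2))
  · exact lowPart_union_image_highPart (mem_powerset.1 hA)
  · obtain ⟨h1, h2⟩ := mem_product.1 hx
    exact Prod.ext (lowPart_union_image (mem_powerset.1 h1) (mem_powerset.1 h2))
      (highPart_union_image (mem_powerset.1 h1) (mem_powerset.1 h2))

lemma dHatL_barMul {P Q : SC} (hP : IsSetComp p P) (hQ : IsSetComp q Q) :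
    dHatL R (Finsupp.single (barMul P Q) 1)
      = mul2bar R (dHatL R (Finsupp.single P 1)) (dHatL R (Finsupp.single Q 1)) := by
  rw [dHatL_single, dHatL_single, dHatL_single, maxG_eq_of_isSetComp (isSetComp_barMul hP hQ),
    maxG_eq_of_isSetComp hP, maxG_eq_of_isSetComp hQ]
  simp only [map_sum, LinearMap.sum_apply, mul2bar_single]
  rw [sum_comm, ← sum_powerset_Icc_add fun A' B' => Finsupp.single
    (barMul (restrictSC A' P) (restrictSC B' Q),
      barMul (restrictSC (Icc 1 p \ A') P) (restrictSC (Icc 1 q \ B') Q)) (1 : R)]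
  refine sum_congr rfl fun A hA => ?_
  rw [restrictSC_barMul hP hQ (mem_powerset.1 hA), restrictSC_barMul hP hQ sdiff_subset,
    lowPart_sdiff, highPart_sdiff]

end Bialgebra

section Convolution

/-- The convolution product `f ⋆ g` of maps on basis elements. -/
noncomputable def barConv (f g : SC → FM R) (P : SC) : FM R :=
  ∑ A ∈ (Icc 1 (maxG P)).powerset,
    barL R (f (restrictSC A P)) (g (restrictSC (Icc 1 (maxG P) \ A) P))

/-- The unit of the convolution product, `η ∘ ε`. -/
noncomputable def unitCounit (P : SC) : FM R :=
  counitL R (Finsupp.single P 1) • Finsupp.single [] 1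

variable {R} {n : ℕ} {P : SC}

lemma unitCounit_nil : unitCounit R [] = Finsupp.single [] 1 := by
  rw [unitCounit, counitL_single, if_pos rfl, one_smul]

lemma unitCounit_of_ne_nil (hP : P ≠ []) : unitCounit R P = 0 := by
  rw [unitCounit, counitL_single, if_neg hP, zero_smul]

lemma barConv_of_isSetComp (hP : IsSetComp n P) (f g : SC → FM R) :
    barConv R f g P = ∑ A ∈ (Icc 1 n).powerset,
      barL R (f (restrictSC A P)) (g (restrictSC (Icc 1 n \ A) P)) := by
  rw [barConv, maxG_eq_of_isSetComp hP]

lemma barConv_restrictSC (hP : IsSetComp n P) {D : Finset ℕ} (hD : D ⊆ Icc 1 n)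
    (f g : SC → FM R) :
    barConv R f g (restrictSC D P)
      = ∑ B ∈ D.powerset, barL R (f (restrictSC B P)) (g (restrictSC (D \ B) P)) :=
  sum_restrictSC_restrictSC hP hD fun X Y => barL R (f X) (g Y)

lemma barConv_congr_left (hP : IsSetComp n P) {f f' : SC → FM R}
    (h : ∀ A ⊆ Icc 1 n, f (restrictSC A P) = f' (restrictSC A P)) (g : SC → FM R) :
    barConv R f g P = barConv R f' g P := by
  rw [barConv_of_isSetComp hP, barConv_of_isSetComp hP]
  exact sum_congr rfl fun A hA => by rw [h A (mem_powerset.1 hA)]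

lemma barConv_assoc (hP : IsSetComp n P) (f g h : SC → FM R) :
    barConv R (barConv R f g) h P = barConv R f (barConv R g h) P := by
  rw [barConv_of_isSetComp hP, barConv_of_isSetComp hP]
  calc _ = ∑ D ∈ (Icc 1 n).powerset, ∑ B ∈ D.powerset, barL R (f (restrictSC B P))
          (barL R (g (restrictSC (D \ B) P)) (h (restrictSC (Icc 1 n \ D) P))) := by
        refine sum_congr rfl fun D hD => ?_
        rw [barConv_restrictSC hP (mem_powerset.1 hD), map_sum, LinearMap.sum_apply]
        exact sum_congr rfl fun _ _ => barL_assoc _ _ _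
    _ = _ := by
        rw [sum_powerset_sum_powerset _ fun A C E => barL R (f (restrictSC A P))
          (barL R (g (restrictSC C P)) (h (restrictSC E P)))]
        refine sum_congr rfl fun A _ => ?_
        rw [barConv_restrictSC hP sdiff_subset, map_sum]

lemma barConv_unitCounit_left (hP : IsSetComp n P) (f : SC → FM R) :
    barConv R (unitCounit R) f P = f P := by
  rw [barConv_of_isSetComp hP, sum_eq_single_of_mem ∅ (empty_mem_powerset _) fun A hA hne => ?_]
  · rw [restrictSC_empty, unitCounit_nil, barL_single_nil, sdiff_empty, restrictSC_Icc hP]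
  · rw [unitCounit_of_ne_nil (mt (restrictSC_eq_nil_iff hP (mem_powerset.1 hA)).1 hne), map_zero,
      LinearMap.zero_apply]

lemma barConv_unitCounit_right (hP : IsSetComp n P) (f : SC → FM R) :
    barConv R f (unitCounit R) P = f P := by
  rw [barConv_of_isSetComp hP,
    sum_eq_single_of_mem (Icc 1 n) (mem_powerset_self _) fun A hA hne => ?_]
  · rw [Finset.sdiff_self, restrictSC_empty, unitCounit_nil, barL_apply_single_nil,
      restrictSC_Icc hP]
  · have hAc : restrictSC (Icc 1 n \ A) P ≠ [] := fun h => hne <| subset_antisymm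
      (mem_powerset.1 hA)
      (sdiff_eq_empty_iff_subset.1 ((restrictSC_eq_nil_iff hP sdiff_subset).1 h))
    rw [unitCounit_of_ne_nil hAc, map_zero]

lemma convBarFst_lift_dHatL (f : SC → FM R) (P : SC) :
    convBarFst R (Finsupp.lift _ R SC f) (dHatL R (Finsupp.single P 1))
      = barConv R f (Finsupp.single · 1) P := by
  rw [dHatL_single, map_sum]
  exact sum_congr rfl fun _ _ => by rw [convBarFst, lift_single_one, lift_single_one]

lemma convBarSnd_lift_dHatL (f : SC → FM R) (P : SC) :
    convBarSnd R (Finsupp.lift _ R SC f) (dHatL R (Finsupp.single P 1))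
      = barConv R (Finsupp.single · 1) f P := by
  rw [dHatL_single, map_sum]
  exact sum_congr rfl fun _ _ => by rw [convBarSnd, lift_single_one, lift_single_one]

end Convolution

section Antipode

/-- The recursion `S ⋆ id = η ∘ ε`, solved for its top-degree term `S(P) ∗̄ P|_∅ = S(P)`. -/
noncomputable def barAntipode (P : SC) : FM R :=
  unitCounit R P - ∑ A ∈ ((Icc 1 (maxG P)).powerset.erase (Icc 1 (maxG P))).attach,
    barL R (barAntipode (restrictSC A.1 P))
      (Finsupp.single (restrictSC (Icc 1 (maxG P) \ A.1) P) 1)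
termination_by maxG P
decreasing_by
  obtain ⟨hne, hA⟩ := mem_erase.1 A.2
  refine (maxG_restrictSC_le _ _).trans_lt ?_
  simpa using card_lt_card (Finset.ssubset_iff_subset_ne.2 ⟨mem_powerset.1 hA, hne⟩)

variable {R} {n : ℕ} {P : SC}

lemma barAntipode_eq (P : SC) :
    barAntipode R P = unitCounit R P - ∑ A ∈ (Icc 1 (maxG P)).powerset.erase (Icc 1 (maxG P)),
      barL R (barAntipode R (restrictSC A P))
        (Finsupp.single (restrictSC (Icc 1 (maxG P) \ A) P) 1) := by
  rw [barAntipode, sum_attach _ fun A => barL R (barAntipode R (restrictSC A P))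
    (Finsupp.single (restrictSC (Icc 1 (maxG P) \ A) P) 1)]

lemma barAntipode_nil : barAntipode R [] = Finsupp.single [] 1 := by
  rw [barAntipode_eq, show maxG ([] : SC) = 0 from rfl, Icc_eq_empty (by omega), powerset_empty,
    erase_singleton, sum_empty, sub_zero, unitCounit_nil]

lemma barConv_barAntipode_left (hP : IsSetComp n P) :
    barConv R (barAntipode R) (Finsupp.single · 1) P = unitCounit R P := by
  rw [barConv_of_isSetComp hP, ← add_sum_erase _ _ (mem_powerset_self _), restrictSC_Icc hP,
    Finset.sdiff_self, restrictSC_empty, barL_apply_single_nil, barAntipode_eq P,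
    maxG_eq_of_isSetComp hP, sub_add_cancel]

/-- By associativity `S = (S ⋆ id) ⋆ S = S ⋆ (id ⋆ S)`, and `id ⋆ S = η ∘ ε` is known below the
top degree; comparing the two sides isolates `(id ⋆ S)(P)`. -/
lemma barConv_barAntipode_right (hP : IsSetComp n P) :
    barConv R (Finsupp.single · 1) (barAntipode R) P = unitCounit R P := by
  induction n using Nat.strong_induction_on generalizing P with
  | _ n IH =>
  have hsplit : ∀ g : SC → FM R, barConv R (barAntipode R) g P = g P +
      ∑ A ∈ (Icc 1 n).powerset.erase ∅,
        barL R (barAntipode R (restrictSC A P)) (g (restrictSC (Icc 1 n \ A) P)) := fun g => by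
    rw [barConv_of_isSetComp hP, ← add_sum_erase _ _ (empty_mem_powerset _), restrictSC_empty,
      barAntipode_nil, barL_single_nil, sdiff_empty, restrictSC_Icc hP]
  have hlow : ∑ A ∈ (Icc 1 n).powerset.erase ∅, barL R (barAntipode R (restrictSC A P))
        (barConv R (Finsupp.single · 1) (barAntipode R) (restrictSC (Icc 1 n \ A) P))
      = ∑ A ∈ (Icc 1 n).powerset.erase ∅,
        barL R (barAntipode R (restrictSC A P)) (unitCounit R (restrictSC (Icc 1 n \ A) P)) := by
    refine sum_congr rfl fun A hA => ?_
    obtain ⟨hne, hA⟩ := mem_erase.1 hA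
    have hlt : (Icc 1 n \ A).card < n := by
      simpa using card_lt_card (sdiff_ssubset (mem_powerset.1 hA) (nonempty_iff_ne_empty.2 hne))
    rw [IH _ hlt (isSetComp_restrictSC hP sdiff_subset)]
  have hS : barAntipode R P
      = barConv R (barAntipode R) (barConv R (Finsupp.single · 1) (barAntipode R)) P := by
    rw [← barConv_assoc hP, ← barConv_unitCounit_left hP (barAntipode R)]
    refine (barConv_congr_left hP (f := barConv R (barAntipode R) (Finsupp.single · 1))
      (f' := unitCounit R) (fun A hA => ?_) _).symm
    exact barConv_barAntipode_left (isSetComp_restrictSC hP hA)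
  have hY := hsplit (unitCounit R)
  rw [barConv_unitCounit_right hP] at hY
  rw [hsplit, hlow] at hS
  exact add_right_cancel (hS.symm.trans hY)

end Antipode

/-- **Theorem.** `(T_•, ∗̄, δ̂)` is a graded connected cocommutative Hopf algebra
over ℤ: `∗̄` is a graded associative unital product, `δ̂` is a coassociative
cocommutative counital coproduct, `δ̂` and the counit are algebra homomorphisms,
and an antipode exists. -/
theorem bar_hat_hopf_algebra :
    -- graded associative unital algebra
    (∀ (p q : ℕ) (P Q : SC), IsSetComp p P → IsSetComp q Q →
        IsSetComp (p + q) (barMul P Q)) ∧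
    (∀ x y z : FM ℤ, x ∈ Tspan ℤ → y ∈ Tspan ℤ → z ∈ Tspan ℤ →
        barL ℤ (barL ℤ x y) z = barL ℤ x (barL ℤ y z)) ∧
    (∀ x : FM ℤ, x ∈ Tspan ℤ →
        barL ℤ (Finsupp.single ([] : SC) 1) x = x ∧
        barL ℤ x (Finsupp.single ([] : SC) 1) = x) ∧
    -- coassociative cocommutative counital coproduct
    (∀ (n : ℕ) (P : SC), IsSetComp n P →
        applyFst ℤ (dHatL ℤ) (dHatL ℤ (Finsupp.single P 1)) =
          applySnd ℤ (dHatL ℤ) (dHatL ℤ (Finsupp.single P 1))) ∧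
    (∀ (n : ℕ) (P : SC), IsSetComp n P →
        twistL ℤ (dHatL ℤ (Finsupp.single P 1)) = dHatL ℤ (Finsupp.single P 1)) ∧
    (∀ (n : ℕ) (P : SC), IsSetComp n P →
        epsFst ℤ (dHatL ℤ (Finsupp.single P 1)) = Finsupp.single P 1 ∧
        epsSnd ℤ (dHatL ℤ (Finsupp.single P 1)) = Finsupp.single P 1) ∧
    -- δ̂ is an algebra homomorphism: δ̂(x ∗̄ y) = δ̂(x) · δ̂(y)
    (∀ (p q : ℕ) (P Q : SC), IsSetComp p P → IsSetComp q Q →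
        dHatL ℤ (Finsupp.single (barMul P Q) 1) =
          mul2bar ℤ (dHatL ℤ (Finsupp.single P 1)) (dHatL ℤ (Finsupp.single Q 1))) ∧
    -- the counit is an algebra homomorphism
    (∀ (p q : ℕ) (P Q : SC), IsSetComp p P → IsSetComp q Q →
        counitL ℤ (Finsupp.single (barMul P Q) 1) =
          counitL ℤ (Finsupp.single P 1) * counitL ℤ (Finsupp.single Q 1)) ∧
    counitL ℤ (Finsupp.single ([] : SC) 1) = 1 ∧
    -- connectedness: the degree-0 component is spanned by the empty composition
    (∀ P : SC, IsSetComp 0 P → P = []) ∧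
    -- an antipode exists
    (∃ S : FM ℤ →ₗ[ℤ] FM ℤ, ∀ (n : ℕ) (P : SC), IsSetComp n P →
        convBarFst ℤ S (dHatL ℤ (Finsupp.single P 1)) =
          counitL ℤ (Finsupp.single P 1) • Finsupp.single ([] : SC) 1 ∧
        convBarSnd ℤ S (dHatL ℤ (Finsupp.single P 1)) =
          counitL ℤ (Finsupp.single P 1) • Finsupp.single ([] : SC) 1) := by
  refine ⟨fun _ _ _ _ hP hQ => isSetComp_barMul hP hQ,
    fun x y z _ _ _ => barL_assoc x y z,
    fun x _ => ⟨barL_single_nil x, barL_apply_single_nil x⟩,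
    fun _ _ hP => dHatL_coassoc hP,
    fun _ _ hP => twistL_dHatL hP,
    fun _ _ hP => ⟨epsFst_dHatL hP, epsSnd_dHatL hP⟩,
    fun _ _ _ _ hP hQ => dHatL_barMul hP hQ,
    fun _ _ P Q _ _ => counitL_barMul P Q,
    by rw [counitL_single, if_pos rfl],
    fun _ hP => eq_nil_of_isSetComp_zero hP,
    ⟨Finsupp.lift _ ℤ SC (barAntipode ℤ), fun _ _ hP => ⟨?_, ?_⟩⟩⟩
  · rw [convBarFst_lift_dHatL, barConv_barAntipode_left hP, unitCounit]
  · rw [convBarSnd_lift_dHatL, barConv_barAntipode_right hP, unitCounit]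
end
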